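/- In the setting of the previous theorem, the eigenvalue approximation bound ∑_{i=1}^k (|λᵢ| - |q(Cᵢ)|)² ≤ s² ∑_{i=1}^k λᵢ² holds, where s = sin(M,H(X)) = ‖M - H‖_F/‖M‖_F. -/

import Mathlib

/-!
Put `W = Uᵀ X`. It has orthonormal columns, its rows have norm at most `1` (`W Wᵀ` is an orthogonal
projection), and `qᵢ = ∑ⱼ λⱼ Wⱼᵢ²`. Hence the weights `cⱼ = ∑_{i ≤ t} Wⱼᵢ²` lie in `[0, 1]` and add
up to `t + 1`, which gives the weak majorization `∑_{i ≤ t} |qᵢ| ≤ ∑_{i ≤ t} |λᵢ|`. Abel summation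
against the decreasing sequence `|qᵢ|` turns this into `∑ qᵢ² ≤ ∑ |λᵢ| |qᵢ|`, so the left-hand side
is at most `L - Q`, where `L = ∑_{i<k} λᵢ²` and `Q = ∑ qᵢ²`.
On the other hand `H` is the orthogonal projection of `M` onto the span of the `χᵢ χᵢᵀ`, so
`‖M - H‖² = ‖M‖² - Q` and `s² = (T - Q) / T` with `T = ∑ λᵢ² ≥ L`; finally `L - Q ≤ (T - Q) L / T`.
-/

open Matrix Finset

namespace Matrix

variable {m n k R : Type*} [CommRing R]

theorem sum_sum_sq_eq_trace_transpose_mul_self [Fintype m] [Fintype n] (A : Matrix m n R) :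
    ∑ i, ∑ j, A i j ^ 2 = trace (Aᵀ * A) := by
  rw [Finset.sum_comm]
  simp [trace, mul_apply, sq]

theorem col_dotProduct_mulVec_col [Fintype n] (X : Matrix n k R) (M : Matrix n n R) (i : k) :
    (fun r => X r i) ⬝ᵥ (M *ᵥ fun r => X r i) = (Xᵀ * M * X) i i := by
  simp only [dotProduct, mulVec, mul_apply, transpose_apply, Finset.mul_sum, Finset.sum_mul]
  rw [Finset.sum_comm]
  exact Finset.sum_congr rfl fun _ _ => Finset.sum_congr rfl fun _ _ => by ring

theorem transpose_mul_diagonal_mul_apply_self [Fintype m] [DecidableEq m] (A : Matrix m n R)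
    (d : m → R) (i : n) : (Aᵀ * diagonal d * A) i i = ∑ j, d j * A j i ^ 2 := by
  rw [mul_apply]
  simp only [mul_diagonal, transpose_apply]
  exact Finset.sum_congr rfl fun _ _ => by ring

variable [Fintype k] [DecidableEq k]

theorem sum_smul_vecMulVec_col (X : Matrix n k R) (d : k → R) :
    ∑ i, d i • vecMulVec (fun r => X r i) (fun r => X r i) = X * diagonal d * Xᵀ := by
  ext r c
  rw [mul_apply]
  simp only [sum_apply, smul_apply, vecMulVec_apply, mul_diagonal, transpose_apply, smul_eq_mul]
  exact Finset.sum_congr rfl fun i _ => by ring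

theorem trace_diagonal_mul (d : k → R) (A : Matrix k k R) :
    trace (diagonal d * A) = ∑ i, d i * A i i := by
  simp [trace]

theorem trace_transpose_mul_self_conj_diagonal [Fintype n] {X : Matrix n k R} (hX : Xᵀ * X = 1)
    (d : k → R) :
    trace ((X * diagonal d * Xᵀ)ᵀ * (X * diagonal d * Xᵀ)) = ∑ i, d i ^ 2 := by
  have : (X * diagonal d * Xᵀ)ᵀ * (X * diagonal d * Xᵀ) =
      X * (diagonal d * diagonal d) * Xᵀ := by
    simp only [transpose_mul, transpose_transpose, diagonal_transpose, Matrix.mul_assoc]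
    rw [← Matrix.mul_assoc Xᵀ X, hX, Matrix.one_mul]
  rw [this, trace_mul_cycle, ← Matrix.mul_assoc, hX, Matrix.one_mul, diagonal_mul_diagonal]
  simp [trace, sq]

theorem trace_conj_diagonal_transpose_mul [Fintype n] (X : Matrix n k R) (d : k → R)
    (M : Matrix n n R) :
    trace ((X * diagonal d * Xᵀ)ᵀ * M) = ∑ i, d i * (Xᵀ * M * X) i i := by
  rw [transpose_mul, transpose_mul, transpose_transpose, diagonal_transpose, Matrix.mul_assoc,
    trace_mul_cycle', trace_mul_cycle']
  simp only [Matrix.mul_assoc]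
  rw [← Matrix.mul_assoc Xᵀ M X, trace_diagonal_mul]

theorem trace_transpose_mul_self_sub_compression [Fintype n] {X : Matrix n k R} (hX : Xᵀ * X = 1)
    (M : Matrix n n R) {q : k → R} (hq : ∀ i, q i = (Xᵀ * M * X) i i) :
    trace ((M - X * diagonal q * Xᵀ)ᵀ * (M - X * diagonal q * Xᵀ)) =
      trace (Mᵀ * M) - ∑ i, q i ^ 2 := by
  set H := X * diagonal q * Xᵀ
  have hHM : trace (Hᵀ * M) = ∑ i, q i ^ 2 := by
    rw [trace_conj_diagonal_transpose_mul]
    exact sum_congr rfl fun i _ => by rw [← hq, sq]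
  have hMH : trace (Mᵀ * H) = trace (Hᵀ * M) := by
    rw [← trace_transpose, transpose_mul, transpose_transpose]
  rw [transpose_sub, sub_mul, mul_sub, mul_sub, trace_sub, trace_sub, trace_sub, hMH, hHM,
    trace_transpose_mul_self_conj_diagonal hX]
  ring

end Matrix

theorem Matrix.sum_sq_row_le_one {m n : Type*} [Fintype m] [Fintype n] [DecidableEq n]
    {W : Matrix m n ℝ} (hW : Wᵀ * W = 1) (j : m) : ∑ i, W j i ^ 2 ≤ 1 := by
  set P := W * Wᵀ
  have hPsymm : Pᵀ = P := by rw [transpose_mul, transpose_transpose]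
  have hPidem : P * P = P := by rw [Matrix.mul_assoc, ← Matrix.mul_assoc Wᵀ, hW, Matrix.one_mul]
  have hPjj : P j j = ∑ i, W j i ^ 2 := by simp only [P, mul_apply, transpose_apply, sq]
  have hP0 : 0 ≤ P j j := hPjj ▸ sum_nonneg fun i _ => sq_nonneg _
  have : P j j ^ 2 ≤ P j j :=
    calc P j j ^ 2 ≤ ∑ l, P j l ^ 2 := single_le_sum (fun l _ => sq_nonneg (P j l)) (mem_univ j)
      _ = (P * P) j j := by
        rw [mul_apply]
        exact sum_congr rfl fun l _ => by rw [sq, ← hPsymm, transpose_apply, hPsymm]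
      _ = P j j := by rw [hPidem]
  rw [← hPjj]
  nlinarith

theorem sum_mul_le_sum_Iic_of_antitone {α : Type*} [Fintype α] [LinearOrder α]
    [LocallyFiniteOrderBot α] {a c : α → ℝ} (ha : Antitone a) (hc0 : ∀ j, 0 ≤ c j)
    (hc1 : ∀ j, c j ≤ 1) (t : α) (hc : ∑ j, c j = #(Iic t)) :
    ∑ j, a j * c j ≤ ∑ j ∈ Iic t, a j := by
  -- compare every term with the threshold `a t`; the `a t`-terms cancel since `∑ c = #(Iic t)`
  have hterm (j : α) : a j * c j - (if j ≤ t then a j else 0) ≤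
      a t * (c j - if j ≤ t then 1 else 0) := by
    split_ifs with h
    · nlinarith [ha h, hc1 j]
    · nlinarith [ha (not_le.1 h).le, hc0 j]
  have hsum := sum_le_sum fun j (_ : j ∈ univ) => hterm j
  rw [sum_sub_distrib, ← mul_sum, sum_sub_distrib, sum_boole, ← sum_filter, filter_ge_eq_Iic,
    hc] at hsum
  simpa using hsum

theorem Fin.sum_mul_nonneg_of_antitone {k : ℕ} {b g : Fin k → ℝ} (hb : Antitone b)
    (hb0 : ∀ i, 0 ≤ b i) (hg : ∀ t, 0 ≤ ∑ i ∈ Iic t, g i) : 0 ≤ ∑ i, b i * g i := by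
  induction k with
  | zero => simp
  | succ k ih =>
    -- subtracting the last value `β` keeps `b` antitone and nonnegative on the first `k` indices
    set β := b (Fin.last k)
    have hrest : 0 ≤ ∑ i : Fin k, (b i.castSucc - β) * g i.castSucc := by
      refine ih (fun i j hij => by simpa using hb (Fin.castSucc_le_castSucc_iff.2 hij))
        (fun i => sub_nonneg.2 (hb (Fin.le_last _))) fun t => ?_
      simpa [← map_castSuccEmb_Iic, sum_map] using hg t.castSucc
    have htotal : 0 ≤ ∑ i, g i := Iic_top (α := Fin (k + 1)) ▸ hg ⊤
    have hsplit : ∑ i, b i * g i =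
        ∑ i : Fin k, (b i.castSucc - β) * g i.castSucc + β * ∑ i, g i := by
      simp only [Fin.sum_univ_castSucc, β, mul_add, mul_sum]
      rw [← add_assoc, ← sum_add_distrib]
      congr 1
      exact sum_congr rfl fun i _ => by ring
    rw [hsplit]
    exact add_nonneg hrest (mul_nonneg (hb0 _) htotal)

theorem Matrix.sum_Iic_abs_diag_compression_le {n k : ℕ} (hk : k ≤ n)
    {W : Matrix (Fin n) (Fin k) ℝ} (hW : Wᵀ * W = 1) {lam : Fin n → ℝ}
    (hlam : Antitone fun j => |lam j|) (t : Fin k) :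
    ∑ i ∈ Iic t, |(Wᵀ * diagonal lam * W) i i| ≤ ∑ i ∈ Iic t, |lam (Fin.castLE hk i)| := by
  set c : Fin n → ℝ := fun j => ∑ i ∈ Iic t, W j i ^ 2
  have hc0 (j : Fin n) : 0 ≤ c j := sum_nonneg fun i _ => sq_nonneg _
  have hc1 (j : Fin n) : c j ≤ 1 :=
    (sum_le_univ_sum_of_nonneg fun i => sq_nonneg _).trans (sum_sq_row_le_one hW j)
  have hcol (i : Fin k) : ∑ j, W j i ^ 2 = 1 := by
    simpa [mul_apply, sq] using congrFun (congrFun hW i) i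
  have hcsum : ∑ j, c j = #(Iic (Fin.castLE hk t)) := by
    rw [sum_comm, sum_congr rfl fun i _ => hcol i, sum_const, Fin.card_Iic, Fin.card_Iic]
    simp
  calc ∑ i ∈ Iic t, |(Wᵀ * diagonal lam * W) i i|
      ≤ ∑ i ∈ Iic t, ∑ j, |lam j| * W j i ^ 2 := by
        refine sum_le_sum fun i _ => ?_
        rw [transpose_mul_diagonal_mul_apply_self]
        refine (abs_sum_le_sum_abs _ _).trans_eq (sum_congr rfl fun j _ => ?_)
        rw [abs_mul, abs_of_nonneg (sq_nonneg (W j i))]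
    _ = ∑ j, |lam j| * c j := by
        rw [sum_comm]
        simp only [c, mul_sum]
    _ ≤ ∑ j ∈ Iic (Fin.castLE hk t), |lam j| :=
        sum_mul_le_sum_Iic_of_antitone hlam hc0 hc1 _ hcsum
    _ = ∑ i ∈ Iic t, |lam (Fin.castLE hk i)| := by
        rw [← Fin.map_castLEEmb_Iic, sum_map]
        rfl

theorem sub_le_div_mul_of_le {T Q L : ℝ} (hL : 0 ≤ L) (hLT : L ≤ T) (hQ : 0 ≤ Q) :
    L - Q ≤ (T - Q) / T * L := by
  obtain rfl | hT := (hL.trans hLT).eq_or_lt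
  · obtain rfl : L = 0 := le_antisymm hLT hL
    simpa using hQ
  · rw [div_mul_eq_mul_div, le_div_iff₀ hT]
    nlinarith [mul_le_mul_of_nonneg_left hLT hQ]

theorem sigma_approx_eigenvalue_approx_general
    (n k : ℕ) (hk : k ≤ n)
    (U : Matrix (Fin n) (Fin n) ℝ) (hU : Uᵀ * U = 1)
    (lam : Fin n → ℝ)
    (hmono : ∀ i j : Fin n, i ≤ j → |lam j| ≤ |lam i|)
    (M : Matrix (Fin n) (Fin n) ℝ)
    (hM : M = U * Matrix.diagonal lam * Uᵀ)
    (X : Matrix (Fin n) (Fin k) ℝ) (hX : Xᵀ * X = 1)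
    (q : Fin k → ℝ)
    (hq : ∀ i : Fin k, q i = (fun r => X r i) ⬝ᵥ (M *ᵥ fun r => X r i))
    (hqmono : ∀ i j : Fin k, i ≤ j → |q j| ≤ |q i|)
    (H : Matrix (Fin n) (Fin n) ℝ)
    (hH : H = ∑ i : Fin k, q i • vecMulVec (fun r => X r i) (fun r => X r i))
    (s : ℝ)
    (hs : s = Real.sqrt (∑ r, ∑ c', (M r c' - H r c') ^ 2) / Real.sqrt (∑ r, ∑ c', (M r c') ^ 2)) :
    ∑ j : Fin k, (|lam (Fin.castLE hk j)| - |q j|) ^ 2 ≤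
      s ^ 2 * ∑ j : Fin k, (lam (Fin.castLE hk j)) ^ 2 := by
  have hqX (i : Fin k) : q i = (Xᵀ * M * X) i i := by rw [hq, col_dotProduct_mulVec_col]
  have hW : (Uᵀ * X)ᵀ * (Uᵀ * X) = 1 := by
    rw [transpose_mul, transpose_transpose, Matrix.mul_assoc, ← Matrix.mul_assoc U,
      mul_eq_one_comm.mp hU, Matrix.one_mul, hX]
  have hqW (i : Fin k) : q i = ((Uᵀ * X)ᵀ * diagonal lam * (Uᵀ * X)) i i := by
    rw [hqX, hM]
    simp only [transpose_mul, transpose_transpose, Matrix.mul_assoc]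
  have hMF : ∑ r, ∑ c, M r c ^ 2 = ∑ j, lam j ^ 2 := by
    rw [sum_sum_sq_eq_trace_transpose_mul_self, hM, trace_transpose_mul_self_conj_diagonal hU]
  have hDF : ∑ r, ∑ c, (M r c - H r c) ^ 2 = ∑ j, lam j ^ 2 - ∑ i, q i ^ 2 := by
    simpa only [Matrix.sub_apply, hH, sum_smul_vecMulVec_col,
      trace_transpose_mul_self_sub_compression hX M hqX, ← sum_sum_sq_eq_trace_transpose_mul_self,
      hMF] using sum_sum_sq_eq_trace_transpose_mul_self (M - H)
  have hLT : ∑ j : Fin k, lam (Fin.castLE hk j) ^ 2 ≤ ∑ j, lam j ^ 2 :=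
    (sum_map univ (Fin.castLEEmb hk) fun j => lam j ^ 2).symm.trans_le
      (sum_le_univ_sum_of_nonneg fun j => sq_nonneg _)
  have hs2 : s ^ 2 = (∑ j, lam j ^ 2 - ∑ i, q i ^ 2) / ∑ j, lam j ^ 2 := by
    rw [hs, div_pow, Real.sq_sqrt (by positivity), Real.sq_sqrt (by positivity), hDF, hMF]
  have hcross : 0 ≤ ∑ i, |q i| * (|lam (Fin.castLE hk i)| - |q i|) := by
    refine Fin.sum_mul_nonneg_of_antitone hqmono (fun i => abs_nonneg _) fun t => ?_
    rw [sum_sub_distrib, sub_nonneg]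
    simpa only [hqW] using sum_Iic_abs_diag_compression_le hk hW hmono t
  calc ∑ j : Fin k, (|lam (Fin.castLE hk j)| - |q j|) ^ 2
      = ∑ j : Fin k, lam (Fin.castLE hk j) ^ 2 - ∑ i, q i ^ 2
          - 2 * ∑ i, |q i| * (|lam (Fin.castLE hk i)| - |q i|) := by
        rw [← sum_sub_distrib, mul_sum, ← sum_sub_distrib]
        exact sum_congr rfl fun i _ => by rw [← sq_abs (lam _), ← sq_abs (q i)]; ring
    _ ≤ ∑ j : Fin k, lam (Fin.castLE hk j) ^ 2 - ∑ i, q i ^ 2 := by linarith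
    _ ≤ s ^ 2 * ∑ j : Fin k, lam (Fin.castLE hk j) ^ 2 := by
        rw [hs2]
        exact sub_le_div_mul_of_le (sum_nonneg fun j _ => sq_nonneg _) hLT
          (sum_nonneg fun i _ => sq_nonneg _)

/-- Second claim of Theorem `sigma_approx`:
`∑_{i≤k} (|λᵢ| - |qᵢ|)² ≤ s² ∑_{i≤k} λᵢ²`. -/
theorem sigma_approx_eigenvalue_approx
    (n k : ℕ) (hk : k ≤ n)
    (U : Matrix (Fin n) (Fin n) ℝ) (hU : Uᵀ * U = 1)
    (lam : Fin n → ℝ)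
    (hmono : ∀ i j : Fin n, i ≤ j → |lam j| ≤ |lam i|)
    (M : Matrix (Fin n) (Fin n) ℝ)
    (hM : M = U * Matrix.diagonal lam * Uᵀ) (hM0 : M ≠ 0)
    (X : Matrix (Fin n) (Fin k) ℝ) (hX : Xᵀ * X = 1)
    (q : Fin k → ℝ)
    (hq : ∀ i : Fin k, q i = (fun r => X r i) ⬝ᵥ (M *ᵥ fun r => X r i))
    (hqmono : ∀ i j : Fin k, i ≤ j → |q j| ≤ |q i|)
    (H : Matrix (Fin n) (Fin n) ℝ)
    (hH : H = ∑ i : Fin k, q i • vecMulVec (fun r => X r i) (fun r => X r i))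
    (s : ℝ)
    (hs : s = Real.sqrt (∑ r, ∑ c', (M r c' - H r c') ^ 2) / Real.sqrt (∑ r, ∑ c', (M r c') ^ 2)) :
    ∑ j : Fin k, (|lam (Fin.castLE hk j)| - |q j|) ^ 2 ≤
      s ^ 2 * ∑ j : Fin k, (lam (Fin.castLE hk j)) ^ 2 :=
  sigma_approx_eigenvalue_approx_general n k hk U hU lam hmono M hM X hX q hq hqmono H hH s hs
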